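/- If there exists an integer s with p ≤ s ≤ t − 1 such that Σ_{i∈I} q_i ≠ s for every subset I ⊆ {1, …, k} (a YES instance of SUBSET SUM INTERVAL), then the two-player game (X, Ξ, u_L, u_G) has a pure-strategy Nash equilibrium, and hence in particular a finitely supported mixed-strategy Nash equilibrium. -/
import Mathlib


open Finset

namespace MneHardness

/-- The union of two polyhedra
`S = {(h,y,x) : x ≥ 0, h = x, y = 1} ∪ {(h,y,x) : x ≥ 0, h = 0, y = 0}`. -/
def Sset : Set (ℝ × ℝ × ℝ) :=
  {v | (0 ≤ v.2.2 ∧ v.1 = v.2.2 ∧ v.2.1 = 1) ∨ (0 ≤ v.2.2 ∧ v.1 = 0 ∧ v.2.1 = 0)}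

/-- `Q = Σ_{i=1}^k q_i`. -/
def Qval (k : ℕ) (q : ℕ → ℕ) : ℕ := ∑ i ∈ Finset.Icc 1 k, q i

/-- The Latin strategy set `X ⊆ ℝ^{k+3r+2}`, coordinates `x 0, …, x (k+3r+1)`
(coordinates beyond index `k+3r+1` are pinned to `0`). -/
def Xset (k r p : ℕ) (q : ℕ → ℕ) : Set (ℕ → ℝ) :=
  {x | (∀ i ≤ k, x i = 0 ∨ x i = 1) ∧
       (∀ i, 1 ≤ i → i ≤ r → x (k + 3 * r + 1) = x (k + 2 * r + i)) ∧
       (x (k + 3 * r + 1) = (p : ℝ) + ∑ i ∈ Finset.Icc 1 r, (2 : ℝ) ^ (i - 1) * x (k + r + i)) ∧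
       (x 0 / 2 + (∑ i ∈ Finset.Icc 1 k, (q i : ℝ) * x i) ≤ x (k + 3 * r + 1)) ∧
       (∀ i, 1 ≤ i → i ≤ r → (x (k + i), x (k + r + i), x (k + 2 * r + i)) ∈ Sset) ∧
       (∀ i, k + 3 * r + 1 < i → x i = 0)}

/-- The Greek strategy set `Ξ ⊆ ℝ^{r+2}`, coordinates `ξ 0, …, ξ (r+1)`
(coordinates beyond index `r+1` are pinned to `0`). -/
def Ξset (r p : ℕ) : Set (ℕ → ℝ) :=
  {ξ | (∀ i, 1 ≤ i → i ≤ r → ξ i = 0 ∨ ξ i = 1) ∧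
       (ξ (r + 1) = (p : ℝ) + ∑ i ∈ Finset.Icc 1 r, (2 : ℝ) ^ (i - 1) * ξ i) ∧
       (∀ i, r + 1 < i → ξ i = 0)}

/-- The Latin payoff (maximized by the Latin player). -/
noncomputable def uL (k r p : ℕ) (q : ℕ → ℕ) (x ξ : ℕ → ℝ) : ℝ :=
  x 0 / 2 + (∑ i ∈ Finset.Icc 1 k, (q i : ℝ) * x i)
    + 2 * ((Qval k q : ℝ) + 1) * ξ (r + 1) * x (k + 3 * r + 1)
    - ((Qval k q : ℝ) + 1) *
        ((∑ i ∈ Finset.Icc 1 r, (2 : ℝ) ^ (i - 1) * x (k + i)) + (p : ℝ) * x (k + 3 * r + 1))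

/-- The Greek payoff (maximized by the Greek player). -/
def uG (x ξ : ℕ → ℝ) : ℝ := (1 - x 0) * ξ 0

lemma sum_Icc_one' (r : ℕ) (f : ℕ → ℝ) :
    ∑ i ∈ Finset.Icc 1 r, f i = ∑ i ∈ Finset.range r, f (i + 1) := by
  induction r with
  | zero => simp
  | succ n ih => rw [Finset.sum_Icc_succ_top (by omega), ih, Finset.sum_range_succ]

lemma sum_bits' (r n : ℕ) : ∑ i ∈ Finset.range r, 2 ^ i * (n / 2 ^ i % 2) = n % 2 ^ r := by
  induction r with
  | zero => simp [Nat.mod_one]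
  | succ m ih => rw [Finset.sum_range_succ, ih, pow_succ, Nat.mod_mul]

lemma sum_bits_real' (r n : ℕ) (hn : n < 2 ^ r) :
    ∑ i ∈ Finset.Icc 1 r, (2 : ℝ) ^ (i - 1) * ((n / 2 ^ (i - 1) % 2 : ℕ) : ℝ) = (n : ℝ) := by
  rw [sum_Icc_one']
  have h := sum_bits' r n
  rw [Nat.mod_eq_of_lt hn] at h
  calc ∑ i ∈ Finset.range r, (2:ℝ) ^ (i + 1 - 1) * ((n / 2 ^ (i + 1 - 1) % 2 : ℕ) : ℝ)
      = ((∑ i ∈ Finset.range r, 2 ^ i * (n / 2 ^ i % 2) : ℕ) : ℝ) := by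
        push_cast; exact Finset.sum_congr rfl fun i _ => by norm_num
    _ = n := by rw [h]

/-- A YES instance of SUBSET SUM INTERVAL yields a
pure-strategy Nash equilibrium of the game `(X, Ξ, u_L, u_G)`, and hence in
particular a finitely supported mixed-strategy Nash equilibrium. -/
theorem yes_instance_has_pne_and_mne
    (k r p t : ℕ) (q : ℕ → ℕ)
    (hk : 1 ≤ k) (hr : 1 ≤ r) (hq : ∀ i, 1 ≤ i → i ≤ k → 0 < q i)
    (hp : 0 < p) (hpt : p < t) (htp : t = p + 2 ^ r)
    (hyes : ∃ s : ℤ, (p : ℤ) ≤ s ∧ s ≤ (t : ℤ) - 1 ∧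
      ∀ I ⊆ Finset.Icc 1 k, (∑ i ∈ I, (q i : ℤ)) ≠ s) :
    (∃ x ∈ Xset k r p q, ∃ ξ ∈ Ξset r p,
      (∀ x' ∈ Xset k r p q, uL k r p q x' ξ ≤ uL k r p q x ξ) ∧
      (∀ ξ' ∈ Ξset r p, uG x ξ' ≤ uG x ξ)) ∧
    (∃ (m m' : ℕ) (xs : Fin m → (ℕ → ℝ)) (pr : Fin m → ℝ)
        (ξs : Fin m' → (ℕ → ℝ)) (s : Fin m' → ℝ),
      (∀ j, xs j ∈ Xset k r p q) ∧ (∀ j, 0 ≤ pr j) ∧ (∑ j, pr j = 1) ∧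
      (∀ l, ξs l ∈ Ξset r p) ∧ (∀ l, 0 ≤ s l) ∧ (∑ l, s l = 1) ∧
      (∀ x' ∈ Xset k r p q,
        ∑ l, s l * uL k r p q x' (ξs l) ≤ ∑ j, ∑ l, pr j * s l * uL k r p q (xs j) (ξs l)) ∧
      (∀ ξ' ∈ Ξset r p,
        ∑ j, pr j * uG (xs j) ξ' ≤ ∑ j, ∑ l, pr j * s l * uG (xs j) (ξs l))) := by
  obtain ⟨s, hsp, hst, hss⟩ := hyes
  have hs0 : 0 < s := lt_of_lt_of_le (by exact_mod_cast hp) hsp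
  have hs0R : (0:ℝ) ≤ (s:ℝ) := by exact_mod_cast hs0.le
  set n : ℕ := (s - p).toNat with hn
  have hns : (n : ℤ) = s - p := Int.toNat_of_nonneg (by omega)
  have hnlt : n < 2 ^ r := by
    have h2 : (t:ℤ) = p + 2^r := by exact_mod_cast htp
    have : (n:ℤ) < 2^r := by rw [hns]; omega
    exact_mod_cast this
  set bit : ℕ → ℕ := fun j => n / 2 ^ j % 2 with hbitdef
  have hbit01 : ∀ j, bit j = 0 ∨ bit j = 1 := fun j => Nat.mod_two_eq_zero_or_one _
  -- the knapsack maximizer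
  set F := (Finset.Icc 1 k).powerset.filter (fun I => ∑ i ∈ I, (q i : ℤ) ≤ s) with hF
  have hFne : F.Nonempty := ⟨∅, by simp [hF]; omega⟩
  obtain ⟨I0, hI0F, hI0max⟩ := F.exists_max_image (fun I => ∑ i ∈ I, (q i : ℤ)) hFne
  have hI0sub : I0 ⊆ Finset.Icc 1 k := Finset.mem_powerset.mp (Finset.mem_filter.mp hI0F).1
  have hI0le : ∑ i ∈ I0, (q i:ℤ) ≤ s := (Finset.mem_filter.mp hI0F).2
  have hMle : ∑ i ∈ I0, (q i:ℤ) ≤ s - 1 := by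
    have := hss I0 hI0sub; omega
  set M : ℤ := ∑ i ∈ I0, (q i : ℤ) with hM
  have hM0 : (0:ℝ) ≤ (M:ℝ) := by
    have : (0:ℤ) ≤ M := Finset.sum_nonneg fun i _ => Int.natCast_nonneg _
    exact_mod_cast this
  -- strategies
  set xb : ℕ → ℝ := fun i =>
    if i = 0 then 1
    else if i ≤ k then (if i ∈ I0 then 1 else 0)
    else if i ≤ k + r then (s:ℝ) * ((bit (i - k - 1) : ℕ) : ℝ)
    else if i ≤ k + 2*r then ((bit (i - (k + r) - 1) : ℕ) : ℝ)
    else if i ≤ k + 3*r then (s:ℝ)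
    else if i = k + 3*r + 1 then (s:ℝ)
    else 0 with hxbdef
  set ξb : ℕ → ℝ := fun i =>
    if i = 0 then 0
    else if i ≤ r then ((bit (i-1) : ℕ) : ℝ)
    else if i = r + 1 then (s:ℝ)
    else 0 with hξbdef
  -- evaluation lemmas
  have ex0 : xb 0 = 1 := by simp [hxbdef]
  have extop : xb (k + 3*r + 1) = (s:ℝ) := by
    simp only [hxbdef]
    rw [if_neg (by omega), if_neg (by omega), if_neg (by omega), if_neg (by omega),
      if_neg (by omega)]
    simp
  have exq : ∀ i, 1 ≤ i → i ≤ k → xb i = (if i ∈ I0 then 1 else 0) := by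
    intro i h1 h2; simp only [hxbdef]; rw [if_neg (by omega), if_pos h2]
  have exh : ∀ i, 1 ≤ i → i ≤ r → xb (k + i) = (s:ℝ) * ((bit (i-1) : ℕ) : ℝ) := by
    intro i h1 h2; simp only [hxbdef]
    rw [if_neg (by omega), if_neg (by omega), if_pos (by omega)]
    have : k + i - k - 1 = i - 1 := by omega
    rw [this]
  have exy : ∀ i, 1 ≤ i → i ≤ r → xb (k + r + i) = ((bit (i-1) : ℕ) : ℝ) := by
    intro i h1 h2; simp only [hxbdef]
    rw [if_neg (by omega), if_neg (by omega), if_neg (by omega), if_pos (by omega)]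
    have : k + r + i - (k + r) - 1 = i - 1 := by omega
    rw [this]
  have exz : ∀ i, 1 ≤ i → i ≤ r → xb (k + 2*r + i) = (s:ℝ) := by
    intro i h1 h2; simp only [hxbdef]
    rw [if_neg (by omega), if_neg (by omega), if_neg (by omega), if_neg (by omega),
      if_pos (by omega)]
  have extail : ∀ i, k + 3*r + 1 < i → xb i = 0 := by
    intro i hi; simp only [hxbdef]
    rw [if_neg (by omega), if_neg (by omega), if_neg (by omega), if_neg (by omega),
      if_neg (by omega), if_neg (by omega)]
  have eξtop : ξb (r + 1) = (s:ℝ) := by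
    simp only [hξbdef]
    rw [if_neg (by omega), if_neg (by omega)]
    simp
  have eξi : ∀ i, 1 ≤ i → i ≤ r → ξb i = ((bit (i-1) : ℕ) : ℝ) := by
    intro i h1 h2; simp only [hξbdef]; rw [if_neg (by omega), if_pos h2]
  have eξtail : ∀ i, r + 1 < i → ξb i = 0 := by
    intro i hi; simp only [hξbdef]
    rw [if_neg (by omega), if_neg (by omega), if_neg (by omega)]
  -- basic sums
  have hsnR : (s:ℝ) = (p:ℝ) + (n:ℝ) := by
    have : (s:ℤ) = p + n := by omega
    exact_mod_cast this
  have hsum_y : ∑ i ∈ Finset.Icc 1 r, (2:ℝ)^(i-1) * xb (k + r + i) = (n:ℝ) := by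
    rw [Finset.sum_congr rfl (fun i hi => by
      rw [exy i (Finset.mem_Icc.mp hi).1 (Finset.mem_Icc.mp hi).2])]
    exact sum_bits_real' r n hnlt
  have hsum_h : ∑ i ∈ Finset.Icc 1 r, (2:ℝ)^(i-1) * xb (k + i) = (s:ℝ) * (n:ℝ) := by
    have h1 : ∑ i ∈ Finset.Icc 1 r, (2:ℝ)^(i-1) * xb (k + i)
        = (s:ℝ) * ∑ i ∈ Finset.Icc 1 r, (2:ℝ)^(i-1) * ((bit (i-1) : ℕ) : ℝ) := by
      rw [Finset.mul_sum]
      refine Finset.sum_congr rfl fun i hi => ?_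
      rw [exh i (Finset.mem_Icc.mp hi).1 (Finset.mem_Icc.mp hi).2]; ring
    rw [h1, sum_bits_real' r n hnlt]
  have hsum_q : ∑ i ∈ Finset.Icc 1 k, (q i : ℝ) * xb i = (M:ℝ) := by
    have h1 : ∑ i ∈ Finset.Icc 1 k, (q i : ℝ) * xb i
        = ∑ i ∈ Finset.Icc 1 k, (if i ∈ I0 then (q i:ℝ) else 0) := by
      refine Finset.sum_congr rfl fun i hi => ?_
      have hi' := Finset.mem_Icc.mp hi
      rw [exq i hi'.1 hi'.2]
      by_cases h : i ∈ I0 <;> simp [h]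
    rw [h1, Finset.sum_ite_mem, Finset.inter_eq_right.mpr hI0sub, hM]
    push_cast; ring
  -- membership of xb
  have hxbX : xb ∈ Xset k r p q := by
    refine ⟨?_, ?_, ?_, ?_, ?_, extail⟩
    · intro i hik
      rcases Nat.eq_zero_or_pos i with h0 | h0
      · right; rw [h0, ex0]
      · rw [exq i h0 hik]; by_cases h : i ∈ I0 <;> simp [h]
    · intro i h1 h2; rw [extop, exz i h1 h2]
    · rw [extop, hsum_y, hsnR]
    · rw [extop, ex0, hsum_q]
      have : (M:ℝ) ≤ (s:ℝ) - 1 := by exact_mod_cast hMle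
      linarith
    · intro i h1 h2
      rw [exh i h1 h2, exy i h1 h2, exz i h1 h2]
      simp only [Sset, Set.mem_setOf_eq]
      rcases hbit01 (i-1) with hb | hb
      · right; rw [hb]; norm_num; exact_mod_cast hs0.le
      · left; rw [hb]; norm_num; exact_mod_cast hs0.le
  -- membership of ξb
  have hξbΞ : ξb ∈ Ξset r p := by
    refine ⟨?_, ?_, eξtail⟩
    · intro i h1 h2
      rw [eξi i h1 h2]
      rcases hbit01 (i-1) with hb | hb
      · left; rw [hb]; norm_num
      · right; rw [hb]; norm_num
    · rw [eξtop]
      rw [Finset.sum_congr rfl (fun i hi => by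
        rw [eξi i (Finset.mem_Icc.mp hi).1 (Finset.mem_Icc.mp hi).2])]
      rw [sum_bits_real' r n hnlt, hsnR]
  -- value at equilibrium
  have hval : uL k r p q xb ξb = 1/2 + (M:ℝ) + ((Qval k q:ℝ)+1) * (s:ℝ)^2 := by
    simp only [uL]
    rw [ex0, extop, eξtop, hsum_q, hsum_h]
    have hn' : (n:ℝ) = (s:ℝ) - (p:ℝ) := by linarith [hsnR]
    rw [hn']; ring
  -- Latin optimality
  have hLat : ∀ x' ∈ Xset k r p q, uL k r p q x' ξb ≤ uL k r p q xb ξb := by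
    intro x' hx'
    obtain ⟨hbin, heq, hzdef, hbud, hSm, htail⟩ := hx'
    have hy01 : ∀ i, 1 ≤ i → i ≤ r → x' (k+r+i) = 0 ∨ x' (k+r+i) = 1 := by
      intro i h1 h2
      have hS' := hSm i h1 h2
      simp only [Sset, Set.mem_setOf_eq] at hS'
      rcases hS' with ⟨_, _, h⟩ | ⟨_, _, h⟩
      · right; exact h
      · left; exact h
    have hh : ∀ i, 1 ≤ i → i ≤ r → x' (k+i) = x' (k+3*r+1) * x' (k+r+i) := by
      intro i h1 h2
      have hS' := hSm i h1 h2
      simp only [Sset, Set.mem_setOf_eq] at hS'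
      rcases hS' with ⟨_, hA, hB⟩ | ⟨_, hA, hB⟩
      · rw [hB, mul_one, hA]; exact (heq i h1 h2).symm
      · rw [hB, mul_zero, hA]
    have hsum_h' : ∑ i ∈ Finset.Icc 1 r, (2:ℝ)^(i-1) * x' (k+i)
        = x' (k+3*r+1) * (x' (k+3*r+1) - (p:ℝ)) := by
      have h1 : ∑ i ∈ Finset.Icc 1 r, (2:ℝ)^(i-1) * x' (k+i)
          = x' (k+3*r+1) * ∑ i ∈ Finset.Icc 1 r, (2:ℝ)^(i-1) * x' (k+r+i) := by
        rw [Finset.mul_sum]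
        refine Finset.sum_congr rfl fun i hi => ?_
        rw [hh i (Finset.mem_Icc.mp hi).1 (Finset.mem_Icc.mp hi).2]; ring
      have h2 : ∑ i ∈ Finset.Icc 1 r, (2:ℝ)^(i-1) * x' (k+r+i)
          = x' (k+3*r+1) - (p:ℝ) := by linarith [hzdef]
      rw [h1, h2]
    -- z is an integer
    have hwEx : ∃ w : ℤ, x' (k+3*r+1) = (w:ℝ) := by
      classical
      refine ⟨(p:ℤ) + ∑ i ∈ Finset.Icc 1 r, 2^(i-1) * (if x' (k+r+i) = 1 then 1 else 0), ?_⟩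
      rw [hzdef]
      push_cast
      congr 1
      refine Finset.sum_congr rfl fun i hi => ?_
      rcases hy01 i (Finset.mem_Icc.mp hi).1 (Finset.mem_Icc.mp hi).2 with h | h <;>
        rw [h] <;> norm_num
    obtain ⟨w, hw⟩ := hwEx
    have hform : uL k r p q x' ξb
        = x' 0 / 2 + (∑ i ∈ Finset.Icc 1 k, (q i:ℝ) * x' i)
          + ((Qval k q:ℝ)+1) * (2 * (s:ℝ) * x' (k+3*r+1) - (x' (k+3*r+1))^2) := by
      simp only [uL]
      rw [eξtop, hsum_h']; ring
    have hA_le : x' 0 / 2 + ∑ i ∈ Finset.Icc 1 k, (q i:ℝ) * x' i ≤ (Qval k q : ℝ) + 1/2 := by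
      have h0 : x' 0 ≤ 1 := by
        rcases hbin 0 (Nat.zero_le k) with h | h <;> rw [h] <;> norm_num
      have hq' : ∑ i ∈ Finset.Icc 1 k, (q i:ℝ) * x' i ≤ ∑ i ∈ Finset.Icc 1 k, (q i:ℝ) := by
        refine Finset.sum_le_sum fun i hi => ?_
        rcases hbin i (Finset.mem_Icc.mp hi).2 with h | h <;> rw [h] <;> simp
      have hQc : (∑ i ∈ Finset.Icc 1 k, (q i:ℝ)) = (Qval k q : ℝ) := by
        simp only [Qval]; push_cast; ring
      linarith
    by_cases hws : w = s
    · -- z = s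
      have hz_s : x' (k+3*r+1) = (s:ℝ) := by rw [hw, hws]
      set I' := (Finset.Icc 1 k).filter (fun i => x' i = 1) with hI'
      have hsq' : ∑ i ∈ Finset.Icc 1 k, (q i:ℝ) * x' i = ((∑ i ∈ I', (q i:ℤ)):ℝ) := by
        push_cast
        rw [hI', Finset.sum_filter]
        refine Finset.sum_congr rfl fun i hi => ?_
        rcases hbin i (Finset.mem_Icc.mp hi).2 with h | h <;> simp [h]
      have h00 : 0 ≤ x' 0 := by
        rcases hbin 0 (Nat.zero_le k) with h | h <;> rw [h] <;> norm_num
      have hI'le : ∑ i ∈ I', (q i:ℤ) ≤ s := by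
        have : ((∑ i ∈ I', (q i:ℤ)):ℝ) ≤ (s:ℝ) := by
          rw [← hsq']; rw [hz_s] at hbud; linarith
        exact_mod_cast this
      have hI'M : ∑ i ∈ I', (q i:ℤ) ≤ M := by
        refine hI0max I' ?_
        rw [hF]
        exact Finset.mem_filter.mpr ⟨Finset.mem_powerset.mpr (Finset.filter_subset _ _), hI'le⟩
      have hI'MR : ((∑ i ∈ I', (q i:ℤ)):ℝ) ≤ (M:ℝ) := by exact_mod_cast hI'M
      have h0 : x' 0 ≤ 1 := by
        rcases hbin 0 (Nat.zero_le k) with h | h <;> rw [h] <;> norm_num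
      rw [hform, hval, hz_s]
      have hq2 : ((Qval k q:ℝ)+1) * (2*(s:ℝ)*(s:ℝ) - (s:ℝ)^2) = ((Qval k q:ℝ)+1)*(s:ℝ)^2 := by
        ring
      rw [hq2, hsq']
      linarith
    · -- z ≠ s
      have h1i : (1:ℤ) ≤ (w - s)^2 := by
        have habs : 1 ≤ |w - s| := Int.one_le_abs (by omega)
        calc (1:ℤ) = 1 * 1 := by ring
          _ ≤ |w - s| * |w - s| := mul_le_mul habs habs (by norm_num) (abs_nonneg _)
          _ = (w - s)^2 := by rw [← abs_mul, abs_mul_self]; ring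

      have h1R : (1:ℝ) ≤ ((w:ℝ) - (s:ℝ))^2 := by exact_mod_cast h1i
      have hQ0 : (0:ℝ) ≤ (Qval k q : ℝ) := Nat.cast_nonneg _
      rw [hform, hval, hw]
      have key : ((Qval k q:ℝ)+1) * (2*(s:ℝ)*(w:ℝ) - (w:ℝ)^2)
          ≤ ((Qval k q:ℝ)+1) * (s:ℝ)^2 - ((Qval k q:ℝ)+1) := by
        nlinarith [h1R, hQ0]
      linarith
  -- Greek optimality
  have eξ0 : ξb 0 = 0 := by simp [hξbdef]
  have hGre : ∀ ξ' ∈ Ξset r p, uG xb ξ' ≤ uG xb ξb := by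
    intro ξ' _
    simp [uG, ex0, eξ0]
  constructor
  · exact ⟨xb, hxbX, ξb, hξbΞ, hLat, hGre⟩
  · refine ⟨1, 1, fun _ => xb, fun _ => 1, fun _ => ξb, fun _ => 1,
      fun _ => hxbX, fun _ => zero_le_one, by simp,
      fun _ => hξbΞ, fun _ => zero_le_one, by simp, ?_, ?_⟩
    · intro x' hx'
      simp only [Fin.sum_univ_one, one_mul]
      exact hLat x' hx'
    · intro ξ' hξ'
      simp only [Fin.sum_univ_one, one_mul]
      exact hGre ξ' hξ'

end MneHardness
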